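/- arXiv:0708.2757 — 3 statements merged into one kernel-verified Lean document; each statement's English description precedes it below -/
import Mathlib

section
/- Let H be a cocommutative bialgebra over a field k (τ∘Δ = Δ, where τ is the flip of H⊗H) and let R ∈ H⊗H be an invertible element satisfying R·(τ∘Δ)(x) = Δ(x)·R for all x ∈ H, the triangle equations (id⊗Δ)(R) = R₁₃·R₁₂ and (Δ⊗id)(R) = R₁₃·R₂₃, and the normalisation (ε⊗id)(R) = (id⊗ε)(R) = 1. Then R satisfies the 2-cocycle condition: (R⊗1)·(Δ⊗id)(R) = (1⊗R)·(id⊗Δ)(R). -/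
open TensorProduct

noncomputable section

variable (k : Type*) [Field k]

section BialgDefs
variable (H : Type*) [Ring H] [Bialgebra k H]

/-- The comultiplication as an algebra homomorphism. -/
def Δa : H →ₐ[k] H ⊗[k] H := Bialgebra.comulAlgHom k H

/-- The counit as an algebra homomorphism. -/
def εa : H →ₐ[k] k := Bialgebra.counitAlgHom k H

end BialgDefs

section AlgDefs
variable (H : Type*) [Ring H] [Algebra k H]

/-- The flip automorphism of `H ⊗ H`. -/
def τa : H ⊗[k] H ≃ₐ[k] H ⊗[k] H := Algebra.TensorProduct.comm k H H

/-- The associator. -/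
def αa : (H ⊗[k] H) ⊗[k] H ≃ₐ[k] H ⊗[k] (H ⊗[k] H) := Algebra.TensorProduct.assoc k k k H H H

end AlgDefs

section MoreDefs
variable (H : Type*) [Ring H] [Bialgebra k H]

/-- `Δ ⊗ id`. -/
def ΔL : H ⊗[k] H →ₐ[k] (H ⊗[k] H) ⊗[k] H :=
  Algebra.TensorProduct.map (Δa k H) (AlgHom.id k H)

/-- `id ⊗ Δ`. -/
def ΔR : H ⊗[k] H →ₐ[k] H ⊗[k] (H ⊗[k] H) :=
  Algebra.TensorProduct.map (AlgHom.id k H) (Δa k H)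

/-- `ε ⊗ id`, composed with the identification `k ⊗ H ≅ H`. -/
def εL : H ⊗[k] H →ₐ[k] H :=
  (Algebra.TensorProduct.lid k H).toAlgHom.comp
    (Algebra.TensorProduct.map (εa k H) (AlgHom.id k H))

/-- `id ⊗ ε`, composed with the identification `H ⊗ k ≅ H`. -/
def εR : H ⊗[k] H →ₐ[k] H :=
  (Algebra.TensorProduct.rid k k H).toAlgHom.comp
    (Algebra.TensorProduct.map (AlgHom.id k H) (εa k H))

/-- The 2-cocycle condition `(F⊗1)·(Δ⊗id)(F) = (1⊗F)·(id⊗Δ)(F)`. -/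
def IsCocycle (F : H ⊗[k] H) : Prop :=
  αa k H ((F ⊗ₜ[k] (1 : H)) * ΔL k H F) = ((1 : H) ⊗ₜ[k] F) * ΔR k H F

/-- The normalisation condition `(ε⊗id)(F) = (id⊗ε)(F) = 1`. -/
def IsNormalized (F : H ⊗[k] H) : Prop := εL k H F = 1 ∧ εR k H F = 1

end MoreDefs

/-- `(f, F)` is a twisted homomorphism of bialgebras. -/
def IsTwistedHom {H H' : Type*} [Ring H] [Ring H'] [Bialgebra k H] [Bialgebra k H']
    (f : H →ₐ[k] H') (F : H' ⊗[k] H') : Prop :=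
  IsUnit F ∧
  (∀ x : H, F * Δa k H' (f x) = Algebra.TensorProduct.map f f (Δa k H x) * F) ∧
  IsCocycle k H' F ∧ IsNormalized k H' F


section RDefs
variable (H : Type*) [Ring H] [Algebra k H]

/-- `R₁₂ = R ⊗ 1`, as an element of `H ⊗ (H ⊗ H)`. -/
def r12 (R : H ⊗[k] H) : H ⊗[k] (H ⊗[k] H) := αa k H (R ⊗ₜ[k] (1 : H))

/-- `R₂₃ = 1 ⊗ R`. -/
def r23 (R : H ⊗[k] H) : H ⊗[k] (H ⊗[k] H) := (1 : H) ⊗ₜ[k] R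

/-- `R₁₃ = (id ⊗ τ)(R ⊗ 1)`. -/
def r13 (R : H ⊗[k] H) : H ⊗[k] (H ⊗[k] H) :=
  Algebra.TensorProduct.map (AlgHom.id k H) (τa k H).toAlgHom (αa k H (R ⊗ₜ[k] (1 : H)))

end RDefs

/-!
By cocommutativity `R` commutes with `Δ(H)`, so `R₂₃` commutes with `(id ⊗ Δ)(R)`. The map
`id ⊗ τ` fixes the image of `id ⊗ Δ` (again by cocommutativity) and swaps `R₁₂` and `R₁₃`;
applied to the first triangle equation it shows that `R₁₂` and `R₁₃` commute. Hence
`(R ⊗ 1)(Δ ⊗ id)(R) = R₁₂ R₁₃ R₂₃ = R₁₃ R₁₂ R₂₃ = (id ⊗ Δ)(R) R₂₃ = R₂₃ (id ⊗ Δ)(R)`.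
-/

theorem Algebra.TensorProduct.commute_one_tmul_map_id {S A B C : Type*} [CommSemiring S]
    [Semiring A] [Algebra S A] [Semiring B] [Algebra S B] [Semiring C] [Algebra S C]
    (f : B →ₐ[S] C) {c : C} (hc : ∀ b, Commute c (f b)) (z : A ⊗[S] B) :
    Commute ((1 : A) ⊗ₜ[S] c) (Algebra.TensorProduct.map (AlgHom.id S A) f z) := by
  induction z using TensorProduct.induction_on with
  | zero => rw [map_zero]; exact Commute.zero_right _
  | tmul a b =>
    rw [Algebra.TensorProduct.map_tmul]
    exact (Commute.one_left a).tmul (hc b)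
  | add x y hx hy => rw [map_add]; exact hx.add_right hy

section Flip23

variable {H : Type*} [Ring H] [Algebra k H]

variable (H) in
abbrev τ23 : H ⊗[k] (H ⊗[k] H) →ₐ[k] H ⊗[k] (H ⊗[k] H) :=
  Algebra.TensorProduct.map (AlgHom.id k H) (τa k H).toAlgHom

theorem τ23_τ23 (z : H ⊗[k] (H ⊗[k] H)) : τ23 k H (τ23 k H z) = z := by
  have hττ : (τa k H).toAlgHom.comp (τa k H).toAlgHom = AlgHom.id k (H ⊗[k] H) := by
    ext <;> rfl
  rw [← AlgHom.comp_apply, ← Algebra.TensorProduct.map_id_comp, hττ,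
    Algebra.TensorProduct.map_id, AlgHom.id_apply]

theorem τ23_r12 (R : H ⊗[k] H) : τ23 k H (r12 k H R) = r13 k H R := rfl

theorem τ23_r13 (R : H ⊗[k] H) : τ23 k H (r13 k H R) = r12 k H R :=
  τ23_τ23 k (r12 k H R)

end Flip23

section Cocommutative

variable {H : Type*} [Ring H] [Bialgebra k H]

theorem τ23_ΔR (hcc : ∀ x : H, τa k H (Δa k H x) = Δa k H x) (z : H ⊗[k] H) :
    τ23 k H (ΔR k H z) = ΔR k H z := by
  have hτΔ : (τa k H).toAlgHom.comp (Δa k H) = Δa k H := AlgHom.ext hcc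
  rw [ΔR, ← AlgHom.comp_apply, ← Algebra.TensorProduct.map_id_comp, hτΔ]

theorem commute_r13_r12 (hcc : ∀ x : H, τa k H (Δa k H x) = Δa k H x) {R : H ⊗[k] H}
    (htri1 : ΔR k H R = r13 k H R * r12 k H R) : Commute (r13 k H R) (r12 k H R) := by
  have h := congrArg (τ23 k H) htri1
  rwa [τ23_ΔR k hcc, map_mul, τ23_r13, τ23_r12, htri1] at h

theorem commute_comul_of_cocomm (hcc : ∀ x : H, τa k H (Δa k H x) = Δa k H x)
    {R : H ⊗[k] H} (hconj : ∀ x : H, R * τa k H (Δa k H x) = Δa k H x * R) (x : H) :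
    Commute R (Δa k H x) := by
  have h := hconj x
  rwa [hcc] at h

end Cocommutative

theorem rmatrix_isCocycle {H : Type*} [Ring H] [Bialgebra k H]
    (hcc : ∀ x : H, τa k H (Δa k H x) = Δa k H x)
    (R : H ⊗[k] H)
    (hconj : ∀ x : H, R * τa k H (Δa k H x) = Δa k H x * R)
    (htri1 : ΔR k H R = r13 k H R * r12 k H R)
    (htri2 : αa k H (ΔL k H R) = r13 k H R * r23 k H R) :
    IsCocycle k H R := by
  have h23 : Commute (r23 k H R) (ΔR k H R) :=
    Algebra.TensorProduct.commute_one_tmul_map_id _ (commute_comul_of_cocomm k hcc hconj) R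
  calc αa k H ((R ⊗ₜ[k] (1 : H)) * ΔL k H R)
      = r12 k H R * (r13 k H R * r23 k H R) := by rw [map_mul, htri2]; rfl
    _ = ΔR k H R * r23 k H R := by
      rw [← mul_assoc, ← (commute_r13_r12 k hcc htri1).eq, htri1]
    _ = r23 k H R * ΔR k H R := h23.eq.symm

end
end

section
/- Let g be a Lie algebra over a field k of characteristic zero, and let X, Y ∈ U(g)⊗U(g) lie in the image of g⊗g, be antisymmetric (τ(X) = −X, τ(Y) = −Y) and g-invariant ([Δ(x), X] = [Δ(x), Y] = 0 for all x ∈ g). Then: (i) the commutator [X,Y] is a g-invariant additive 2-cocycle and is symmetric, τ([X,Y]) = [X,Y]; (ii) there exists a central element a ∈ Z(U(g)) with [X,Y] = a⊗1 + 1⊗a − Δ(a); (iii) for every Z ∈ U(g)⊗U(g) in the image of g⊗g with τ(Z) = −Z and [Δ(x), Z] = 0 for all x ∈ g, one has [[X,Y], Z] = 0. -/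
open TensorProduct

noncomputable section

variable (k : Type*) [Field k] [CharZero k]
variable (g : Type*) [LieRing g] [LieAlgebra k g]

attribute [local instance] LieRing.ofAssociativeRing in
/-- The canonical linear map `g → U(g)`. -/
def ιU : g →ₗ[k] UniversalEnvelopingAlgebra k g :=
  (UniversalEnvelopingAlgebra.ι k).toLinearMap

/-- The canonical map `g ⊗ g → U(g) ⊗ U(g)`; its range is "the image of `g ⊗ g`". -/
def ιι : g ⊗[k] g →ₗ[k]
    UniversalEnvelopingAlgebra k g ⊗[k] UniversalEnvelopingAlgebra k g :=
  TensorProduct.map (ιU k g) (ιU k g)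

/-- The flip automorphism of `U(g) ⊗ U(g)`. -/
def τU : UniversalEnvelopingAlgebra k g ⊗[k] UniversalEnvelopingAlgebra k g ≃ₐ[k]
    UniversalEnvelopingAlgebra k g ⊗[k] UniversalEnvelopingAlgebra k g :=
  Algebra.TensorProduct.comm k _ _

/-- The associator for `U(g)`. -/
def αU : (UniversalEnvelopingAlgebra k g ⊗[k] UniversalEnvelopingAlgebra k g) ⊗[k]
      UniversalEnvelopingAlgebra k g ≃ₐ[k]
    UniversalEnvelopingAlgebra k g ⊗[k]
      (UniversalEnvelopingAlgebra k g ⊗[k] UniversalEnvelopingAlgebra k g) :=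
  Algebra.TensorProduct.assoc k k k _ _ _

/-- The alternation `Alt₂(X) = ½(X − τ(X))`. -/
def alt2 (X : UniversalEnvelopingAlgebra k g ⊗[k] UniversalEnvelopingAlgebra k g) :
    UniversalEnvelopingAlgebra k g ⊗[k] UniversalEnvelopingAlgebra k g :=
  (2 : k)⁻¹ • (X - τU k g X)

variable {g} in
/-- `X` is an additive 2-cocycle: `1⊗X + (id⊗Δ)(X) = X⊗1 + (Δ⊗id)(X)`. -/
def IsAdd2Cocycle
    (Δ : UniversalEnvelopingAlgebra k g →ₐ[k]
      UniversalEnvelopingAlgebra k g ⊗[k] UniversalEnvelopingAlgebra k g)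
    (X : UniversalEnvelopingAlgebra k g ⊗[k] UniversalEnvelopingAlgebra k g) : Prop :=
  (1 : UniversalEnvelopingAlgebra k g) ⊗ₜ[k] X +
      Algebra.TensorProduct.map (AlgHom.id k (UniversalEnvelopingAlgebra k g)) Δ X =
    αU k g (X ⊗ₜ[k] (1 : UniversalEnvelopingAlgebra k g) +
      Algebra.TensorProduct.map Δ (AlgHom.id k (UniversalEnvelopingAlgebra k g)) X)

local notation "Ug" => UniversalEnvelopingAlgebra k g

/-!
Write `X = ∑ aᵢ ⊗ bᵢ` with `aᵢ, bᵢ ∈ g`. Since the legs are primitive, `(id ⊗ Δ) X = X₁₂ + X₁₃`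
and `(Δ ⊗ id) X = X₁₃ + X₂₃`, so the cocycle condition for `[X, Y]` reduces to
`[X₁₂, Y₁₃] + [X₁₃, Y₁₂] = [X₁₃, Y₂₃] + [X₂₃, Y₁₃]`. Invariance of `Y` moves each leg `aᵢ` of `X`
from slot 1 to slot 3 of `[X₁₂, Y₁₃]` at the cost of a sign, and antisymmetry of `X` then gives
`[X₁₂, Y₁₃] = [X₂₃, Y₁₃]`; symmetrically `[X₁₃, Y₁₂] = [X₁₃, Y₂₃]`.

For the coboundary, let `μ` be the multiplication and `d a = a ⊗ 1 + 1 ⊗ a - Δ a`. On pure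
tensors one checks that `6 [X, Y] + d (μ [X, Y])` is a combination of the invariance defects
`[Δ z, X]` and `[Δ z, Y]`, hence vanishes for invariant `X, Y`. So `[X, Y] = d a` with
`a = -μ [X, Y] / 6`, which is central because `μ` intertwines `[Δ x, -]` with `[x, -]`. Finally
`a ⊗ 1` and `1 ⊗ a` are central in `U(g) ⊗ U(g)`, and an invariant `Z` commutes with all of
`Δ (U(g))`, so `Z` commutes with `d a`.
-/

theorem Commute.commutator_right {A : Type*} [Ring A] {a x y : A} (hx : Commute a x)
    (hy : Commute a y) : Commute a (x * y - y * x) :=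
  (hx.mul_right hy).sub_right (hy.mul_right hx)

namespace Algebra.TensorProduct

section

variable {R A : Type*} [CommSemiring R] [Semiring A] [Algebra R A]

def leg12 : A ⊗[R] A →ₐ[R] A ⊗[R] (A ⊗[R] A) := map (AlgHom.id R A) includeLeft

def leg13 : A ⊗[R] A →ₐ[R] A ⊗[R] (A ⊗[R] A) := map (AlgHom.id R A) includeRight

def leg23 : A ⊗[R] A →ₐ[R] A ⊗[R] (A ⊗[R] A) := includeRight

@[simp] theorem leg12_tmul (u v : A) : leg12 (u ⊗ₜ[R] v) = u ⊗ₜ[R] (v ⊗ₜ[R] (1 : A)) := by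
  simp [leg12]

@[simp] theorem leg13_tmul (u v : A) : leg13 (u ⊗ₜ[R] v) = u ⊗ₜ[R] ((1 : A) ⊗ₜ[R] v) := by
  simp [leg13]

@[simp] theorem leg23_apply (T : A ⊗[R] A) : leg23 T = (1 : A) ⊗ₜ[R] T := rfl

theorem commute_one_tmul_tmul_one_leg13 (u : A) (T : A ⊗[R] A) :
    Commute ((1 : A) ⊗ₜ[R] (u ⊗ₜ[R] (1 : A))) (leg13 T) := by
  induction T using TensorProduct.induction_on with
  | zero => simp
  | tmul v w =>
    simpa using (Commute.one_left v).tmul ((Commute.one_right u).tmul (Commute.one_left w))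
  | add T₁ T₂ h₁ h₂ => simpa using h₁.add_right h₂

theorem commute_tmul_one {a : A} (ha : ∀ u, Commute a u) (T : A ⊗[R] A) :
    Commute (a ⊗ₜ[R] (1 : A)) T := by
  induction T using TensorProduct.induction_on with
  | zero => exact Commute.zero_right _
  | tmul u v => exact (ha u).tmul (Commute.one_left v)
  | add T₁ T₂ h₁ h₂ => exact h₁.add_right h₂

theorem commute_one_tmul {a : A} (ha : ∀ u, Commute a u) (T : A ⊗[R] A) :
    Commute ((1 : A) ⊗ₜ[R] a) T := by
  induction T using TensorProduct.induction_on with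
  | zero => exact Commute.zero_right _
  | tmul u v => exact (Commute.one_left u).tmul (ha v)
  | add T₁ T₂ h₁ h₂ => exact h₁.add_right h₂

end

section

variable {R A : Type*} [CommSemiring R] [Ring A] [Algebra R A]

theorem mul'_commutator_tmul_one_add_one_tmul (a : A) (T : A ⊗[R] A) :
    LinearMap.mul' R A ((a ⊗ₜ 1 + 1 ⊗ₜ a) * T - T * (a ⊗ₜ 1 + 1 ⊗ₜ a)) =
      a * LinearMap.mul' R A T - LinearMap.mul' R A T * a := by
  induction T using TensorProduct.induction_on with
  | zero => simp
  | tmul u v => simp only [add_mul, mul_add, map_sub, map_add, tmul_mul_tmul,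
      LinearMap.mul'_apply, one_mul, mul_one]; noncomm_ring
  | add T₁ T₂ h₁ h₂ =>
    have hsplit : (a ⊗ₜ 1 + 1 ⊗ₜ a) * (T₁ + T₂) - (T₁ + T₂) * (a ⊗ₜ 1 + 1 ⊗ₜ a) =
        ((a ⊗ₜ 1 + 1 ⊗ₜ a) * T₁ - T₁ * (a ⊗ₜ 1 + 1 ⊗ₜ a)) +
          ((a ⊗ₜ 1 + 1 ⊗ₜ a) * T₂ - T₂ * (a ⊗ₜ 1 + 1 ⊗ₜ a)) := by
      noncomm_ring
    rw [hsplit, map_add, h₁, h₂, map_add]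
    noncomm_ring

def coboundary (Δ : A →ₐ[R] A ⊗[R] A) : A →ₗ[R] A ⊗[R] A :=
  includeLeft.toLinearMap + includeRight.toLinearMap - Δ.toLinearMap

@[simp] theorem coboundary_apply (Δ : A →ₐ[R] A ⊗[R] A) (a : A) :
    coboundary Δ a = a ⊗ₜ 1 + 1 ⊗ₜ a - Δ a := rfl

/-- The two ways in which an invariance defect `[Δ z, X] ⊗ w` enters the coboundary identity
`six_smul_commutator_add_coboundary_eq_defects`. -/
def defectShape₁ : (A ⊗[R] A) ⊗[R] A →ₗ[R] A ⊗[R] A :=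
  _root_.TensorProduct.lift <| LinearMap.mk₂ R
    (fun p f => (f ⊗ₜ 1) * p + p * (f ⊗ₜ 1) - ((1 ⊗ₜ f) * p + p * (1 ⊗ₜ f)) -
      (LinearMap.mul' R A p ⊗ₜ f - f ⊗ₜ LinearMap.mul' R A p))
    (fun p p' f => by simp only [add_mul, mul_add, map_add, add_tmul, tmul_add]; abel)
    (fun c p f => by
      simp only [mul_smul_comm, smul_mul_assoc, map_smul, ← smul_tmul', tmul_smul, smul_sub,
        smul_add])
    (fun p f f' => by simp only [add_mul, mul_add, add_tmul, tmul_add]; abel)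
    (fun c p f => by
      simp only [mul_smul_comm, smul_mul_assoc, ← smul_tmul', tmul_smul, smul_sub, smul_add])

def defectShape₂ : (A ⊗[R] A) ⊗[R] A →ₗ[R] A ⊗[R] A :=
  _root_.TensorProduct.lift <| LinearMap.mk₂ R (fun p f => (1 ⊗ₜ f) * p - p * (f ⊗ₜ 1))
    (fun p p' f => by simp only [add_mul, mul_add]; abel)
    (fun c p f => by simp only [mul_smul_comm, smul_mul_assoc, smul_sub])
    (fun p f f' => by simp only [add_mul, mul_add, add_tmul, tmul_add]; abel)
    (fun c p f => by
      simp only [mul_smul_comm, smul_mul_assoc, ← smul_tmul', tmul_smul, smul_sub])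

@[simp] theorem defectShape₁_tmul (p : A ⊗[R] A) (f : A) :
    defectShape₁ (p ⊗ₜ f) = (f ⊗ₜ 1) * p + p * (f ⊗ₜ 1) - ((1 ⊗ₜ f) * p + p * (1 ⊗ₜ f)) -
      (LinearMap.mul' R A p ⊗ₜ f - f ⊗ₜ LinearMap.mul' R A p) := rfl

@[simp] theorem defectShape₂_tmul (p : A ⊗[R] A) (f : A) :
    defectShape₂ (p ⊗ₜ f) = (1 ⊗ₜ f) * p - p * (f ⊗ₜ 1) := rfl

end

end Algebra.TensorProduct

namespace UniversalEnvelopingAlgebra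

variable {R L B : Type*} [CommRing R] [LieRing L] [LieAlgebra R L] [Semiring B] [Algebra R B]

theorem adjoin_range_ι :
    Algebra.adjoin R (Set.range (ι R : L → UniversalEnvelopingAlgebra R L)) = ⊤ := by
  have hι : (ι R : L → UniversalEnvelopingAlgebra R L) = mkAlgHom R L ∘ TensorAlgebra.ι R := rfl
  rw [hι, Set.range_comp, ← AlgHom.map_adjoin, TensorAlgebra.adjoin_range_ι, Algebra.map_top,
    AlgHom.range_eq_top]
  exact RingCon.mkₐ_surjective _

theorem commute_apply_of_forall_commute_ι (f : UniversalEnvelopingAlgebra R L →ₐ[R] B) {b : B}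
    (h : ∀ x : L, Commute b (f (ι R x))) (u : UniversalEnvelopingAlgebra R L) :
    Commute b (f u) := by
  refine Algebra.commute_of_mem_adjoin_of_forall_mem_commute (R := R)
    (s := f '' Set.range (ι R)) ?_ ?_
  · rw [← AlgHom.map_adjoin, adjoin_range_ι]; exact ⟨u, trivial, rfl⟩
  · rintro _ ⟨_, ⟨x, rfl⟩, rfl⟩; exact h x

end UniversalEnvelopingAlgebra

section

variable {k g}

omit [CharZero k]

open Algebra.TensorProduct

theorem τU_ιι (t : g ⊗[k] g) : τU k g (ιι k g t) = ιι k g (TensorProduct.comm k g g t) := by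
  induction t using TensorProduct.induction_on with
  | zero => simp
  | tmul x y => simp [ιι, τU]
  | add t₁ t₂ h₁ h₂ => simp only [map_add, h₁, h₂]

theorem αU_tmul_one (T : Ug ⊗[k] Ug) : αU k g (T ⊗ₜ[k] 1) = leg12 T := by
  induction T using TensorProduct.induction_on with
  | zero => simp
  | tmul u v => simp [αU]
  | add T₁ T₂ h₁ h₂ => rw [add_tmul, map_add, h₁, h₂, map_add]

theorem map_id_Δ_of_mem_range {Δ : Ug →ₐ[k] Ug ⊗[k] Ug}
    (hΔ : ∀ x : g, Δ (ιU k g x) = ιU k g x ⊗ₜ[k] 1 + 1 ⊗ₜ[k] ιU k g x)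
    {X : Ug ⊗[k] Ug} (hX : X ∈ LinearMap.range (ιι k g)) :
    map (AlgHom.id k Ug) Δ X = leg12 X + leg13 X := by
  obtain ⟨t, rfl⟩ := hX
  induction t using TensorProduct.induction_on with
  | zero => simp
  | tmul x y => simp [ιι, hΔ, tmul_add]
  | add t₁ t₂ h₁ h₂ => simp only [map_add, h₁, h₂]; abel

theorem αU_map_Δ_id_of_mem_range {Δ : Ug →ₐ[k] Ug ⊗[k] Ug}
    (hΔ : ∀ x : g, Δ (ιU k g x) = ιU k g x ⊗ₜ[k] 1 + 1 ⊗ₜ[k] ιU k g x)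
    {X : Ug ⊗[k] Ug} (hX : X ∈ LinearMap.range (ιι k g)) :
    αU k g (map Δ (AlgHom.id k Ug) X) = leg13 X + leg23 X := by
  obtain ⟨t, rfl⟩ := hX
  induction t using TensorProduct.induction_on with
  | zero => simp
  | tmul x y => simp [ιι, hΔ, add_tmul, αU]
  | add t₁ t₂ h₁ h₂ => simp only [map_add, h₁, h₂]; abel

theorem commute_leg12_add_leg23_τU_leg13 {Δ : Ug →ₐ[k] Ug ⊗[k] Ug}
    (hΔ : ∀ x : g, Δ (ιU k g x) = ιU k g x ⊗ₜ[k] 1 + 1 ⊗ₜ[k] ιU k g x)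
    {Y : Ug ⊗[k] Ug} (hYinv : ∀ x : g, Commute (Δ (ιU k g x)) Y) (t : g ⊗[k] g) :
    Commute (leg12 (ιι k g t) + leg23 (τU k g (ιι k g t))) (leg13 Y) := by
  induction t using TensorProduct.induction_on with
  | zero => simp
  | tmul x y =>
    -- `x ⊗ y ⊗ 1 + 1 ⊗ y ⊗ x = (Δ x)₁₃ * (1 ⊗ y ⊗ 1)`, and both factors commute with `Y₁₃`.
    have hsplit : leg12 (ιι k g (x ⊗ₜ y)) + leg23 (τU k g (ιι k g (x ⊗ₜ y))) =
        leg13 (Δ (ιU k g x)) * (1 ⊗ₜ (ιU k g y ⊗ₜ 1)) := by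
      simp [ιι, τU, hΔ, add_mul]
    rw [hsplit]
    exact ((hYinv x).map leg13).mul_left (commute_one_tmul_tmul_one_leg13 _ _)
  | add t₁ t₂ h₁ h₂ =>
    simp only [map_add]
    rw [add_add_add_comm]
    exact h₁.add_left h₂

theorem commutator_leg12_leg13_eq {Δ : Ug →ₐ[k] Ug ⊗[k] Ug}
    (hΔ : ∀ x : g, Δ (ιU k g x) = ιU k g x ⊗ₜ[k] 1 + 1 ⊗ₜ[k] ιU k g x)
    {X Y : Ug ⊗[k] Ug} (hXr : X ∈ LinearMap.range (ιι k g)) (hXa : τU k g X = -X)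
    (hYinv : ∀ x : g, Commute (Δ (ιU k g x)) Y) :
    leg12 X * leg13 Y - leg13 Y * leg12 X = leg23 X * leg13 Y - leg13 Y * leg23 X := by
  obtain ⟨t, rfl⟩ := hXr
  have key := (commute_leg12_add_leg23_τU_leg13 hΔ hYinv t).eq
  -- Antisymmetry is used as `τ X + X = 0`: the two module structures on the inner factor of
  -- `Ug ⊗ (Ug ⊗ Ug)` agree only up to unfolding, which blocks `neg_mul` and `noncomm_ring`.
  have hsum : leg23 (τU k g (ιι k g t)) + leg23 (ιι k g t) = 0 := by
    rw [← map_add, hXa, neg_add_cancel, map_zero]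
  rw [← sub_eq_zero]
  calc _ = ((leg12 (ιι k g t) + leg23 (τU k g (ιι k g t))) * leg13 Y -
        leg13 Y * (leg12 (ιι k g t) + leg23 (τU k g (ιι k g t)))) -
        ((leg23 (τU k g (ιι k g t)) + leg23 (ιι k g t)) * leg13 Y -
          leg13 Y * (leg23 (τU k g (ιι k g t)) + leg23 (ιι k g t))) := by noncomm_ring
    _ = 0 := by rw [key, hsum, sub_self, zero_mul, mul_zero, sub_self, sub_zero]

theorem isAdd2Cocycle_commutator {Δ : Ug →ₐ[k] Ug ⊗[k] Ug}
    (hΔ : ∀ x : g, Δ (ιU k g x) = ιU k g x ⊗ₜ[k] 1 + 1 ⊗ₜ[k] ιU k g x)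
    {X Y : Ug ⊗[k] Ug}
    (hXr : X ∈ LinearMap.range (ιι k g)) (hYr : Y ∈ LinearMap.range (ιι k g))
    (hXa : τU k g X = -X) (hYa : τU k g Y = -Y)
    (hXinv : ∀ x : g, Commute (Δ (ιU k g x)) X) (hYinv : ∀ x : g, Commute (Δ (ιU k g x)) Y) :
    IsAdd2Cocycle k Δ (X * Y - Y * X) := by
  have hXY := commutator_leg12_leg13_eq hΔ hXr hXa hYinv
  have hYX := commutator_leg12_leg13_eq hΔ hYr hYa hXinv
  unfold IsAdd2Cocycle
  rw [← sub_eq_zero]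
  simp only [map_add, map_sub, map_mul, αU_tmul_one, map_id_Δ_of_mem_range hΔ hXr,
    map_id_Δ_of_mem_range hΔ hYr, αU_map_Δ_id_of_mem_range hΔ hXr,
    αU_map_Δ_id_of_mem_range hΔ hYr, ← leg23_apply]
  calc _ = (leg12 X * leg13 Y - leg13 Y * leg12 X - (leg23 X * leg13 Y - leg13 Y * leg23 X)) -
        (leg12 Y * leg13 X - leg13 X * leg12 Y - (leg23 Y * leg13 X - leg13 X * leg23 Y)) := by
        noncomm_ring
    _ = 0 := by rw [hXY, hYX, sub_self, sub_self, sub_zero]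

def invarianceDefect (Δ : Ug →ₐ[k] Ug ⊗[k] Ug) :
    (Ug ⊗[k] Ug) →ₗ[k] g ⊗[k] g →ₗ[k] (Ug ⊗[k] Ug) ⊗[k] Ug where
  toFun X := TensorProduct.map
    ((LinearMap.mulRight k X - LinearMap.mulLeft k X) ∘ₗ Δ.toLinearMap ∘ₗ ιU k g) (ιU k g)
  map_add' X X' := TensorProduct.ext' fun z w => by
    simp only [LinearMap.add_apply, TensorProduct.map_tmul, LinearMap.comp_apply,
      LinearMap.sub_apply, LinearMap.mulRight_apply, LinearMap.mulLeft_apply, mul_add, add_mul,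
      ← add_tmul]
    congr 1; abel
  map_smul' c X := TensorProduct.ext' fun z w => by
    simp only [LinearMap.smul_apply, TensorProduct.map_tmul, LinearMap.comp_apply,
      LinearMap.sub_apply, LinearMap.mulRight_apply, LinearMap.mulLeft_apply, mul_smul_comm,
      smul_mul_assoc, ← smul_sub, smul_tmul', RingHom.id_apply]

@[simp] theorem invarianceDefect_tmul (Δ : Ug →ₐ[k] Ug ⊗[k] Ug) (X : Ug ⊗[k] Ug) (z w : g) :
    invarianceDefect Δ X (z ⊗ₜ w) = (Δ (ιU k g z) * X - X * Δ (ιU k g z)) ⊗ₜ ιU k g w := rfl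

theorem invarianceDefect_eq_zero {Δ : Ug →ₐ[k] Ug ⊗[k] Ug} {X : Ug ⊗[k] Ug}
    (hX : ∀ x : g, Commute (Δ (ιU k g x)) X) : invarianceDefect Δ X = 0 :=
  TensorProduct.ext' fun z w => by simp [(hX z).eq]

theorem six_smul_commutator_add_coboundary_eq_defects {Δ : Ug →ₐ[k] Ug ⊗[k] Ug}
    (hΔ : ∀ x : g, Δ (ιU k g x) = ιU k g x ⊗ₜ[k] 1 + 1 ⊗ₜ[k] ιU k g x)
    (t s : g ⊗[k] g) {X Y : Ug ⊗[k] Ug}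
    (hX : X = ιι k g (t - TensorProduct.comm k g g t))
    (hY : Y = ιι k g (s - TensorProduct.comm k g g s)) :
    6 • (X * Y - Y * X) + coboundary Δ (LinearMap.mul' k Ug (X * Y - Y * X)) =
      defectShape₁ (invarianceDefect Δ X (s - TensorProduct.comm k g g s)) +
        2 • defectShape₂ (invarianceDefect Δ Y (t - TensorProduct.comm k g g t)) := by
  subst hX hY
  -- Both sides are bilinear in `(t, s)`, so it suffices to compare them on pure tensors.
  let θ : g ⊗[k] g →ₗ[k] g ⊗[k] g := LinearMap.id - (TensorProduct.comm k g g).toLinearMap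
  let bracket := LinearMap.mul k (Ug ⊗[k] Ug) - (LinearMap.mul k (Ug ⊗[k] Ug)).flip
  let Ξ : Ug ⊗[k] Ug →ₗ[k] Ug ⊗[k] Ug := 6 • LinearMap.id + coboundary Δ ∘ₗ LinearMap.mul' k Ug
  have key : (bracket.compl₁₂ (ιι k g ∘ₗ θ) (ιι k g ∘ₗ θ)).compr₂ Ξ =
      ((invarianceDefect Δ).compl₁₂ (ιι k g ∘ₗ θ) θ).compr₂ defectShape₁ +
        2 • (((invarianceDefect Δ).compl₁₂ (ιι k g ∘ₗ θ) θ).compr₂ defectShape₂).flip := by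
    refine TensorProduct.ext' fun x y => TensorProduct.ext' fun z w => ?_
    simp only [θ, bracket, Ξ, LinearMap.compr₂_apply, LinearMap.compl₁₂_apply,
      LinearMap.add_apply, LinearMap.smul_apply, LinearMap.flip_apply, LinearMap.comp_apply,
      LinearMap.sub_apply, LinearMap.id_apply, LinearEquiv.coe_coe, TensorProduct.comm_tmul,
      LinearMap.mul_apply', coboundary_apply, map_sub, ιι, TensorProduct.map_tmul,
      invarianceDefect_tmul, defectShape₁_tmul, defectShape₂_tmul]
    simp only [hΔ, sub_tmul, tmul_sub, add_tmul, tmul_add, add_mul, mul_add, sub_mul, mul_sub,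
      map_add, map_mul, tmul_mul_tmul, LinearMap.mul'_apply, one_mul, mul_one,
      mul_assoc, smul_add, smul_sub]
    abel
  simpa only [θ, bracket, Ξ, LinearMap.compr₂_apply, LinearMap.compl₁₂_apply, LinearMap.add_apply,
    LinearMap.smul_apply, LinearMap.flip_apply, LinearMap.comp_apply, LinearMap.sub_apply,
    LinearMap.id_apply, LinearEquiv.coe_coe, LinearMap.mul_apply'] using
    LinearMap.congr_fun₂ key t s

end

section

variable {k g}

open Algebra.TensorProduct

theorem six_smul_commutator_add_coboundary_eq_zero {Δ : Ug →ₐ[k] Ug ⊗[k] Ug}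
    (hΔ : ∀ x : g, Δ (ιU k g x) = ιU k g x ⊗ₜ[k] 1 + 1 ⊗ₜ[k] ιU k g x)
    {X Y : Ug ⊗[k] Ug}
    (hXr : X ∈ LinearMap.range (ιι k g)) (hYr : Y ∈ LinearMap.range (ιι k g))
    (hXa : τU k g X = -X) (hYa : τU k g Y = -Y)
    (hXinv : ∀ x : g, Commute (Δ (ιU k g x)) X) (hYinv : ∀ x : g, Commute (Δ (ιU k g x)) Y) :
    6 • (X * Y - Y * X) + coboundary Δ (LinearMap.mul' k Ug (X * Y - Y * X)) = 0 := by
  obtain ⟨t, rfl⟩ := hXr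
  obtain ⟨s, rfl⟩ := hYr
  have hθt : ιι k g (t - TensorProduct.comm k g g t) = ιι k g t + ιι k g t := by
    rw [map_sub, ← τU_ιι, hXa, sub_neg_eq_add]
  have hθs : ιι k g (s - TensorProduct.comm k g g s) = ιι k g s + ιι k g s := by
    rw [map_sub, ← τU_ιι, hYa, sub_neg_eq_add]
  have h := six_smul_commutator_add_coboundary_eq_defects hΔ t s hθt.symm hθs.symm
  rw [invarianceDefect_eq_zero fun x => (hXinv x).add_right (hXinv x),
    invarianceDefect_eq_zero fun x => (hYinv x).add_right (hYinv x)] at h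
  have h4 : (ιι k g t + ιι k g t) * (ιι k g s + ιι k g s) -
      (ιι k g s + ιι k g s) * (ιι k g t + ιι k g t) =
        4 • (ιι k g t * ιι k g s - ιι k g s * ιι k g t) := by
    simp only [add_mul, mul_add]; abel
  simp only [h4, LinearMap.zero_apply, map_zero, smul_zero, add_zero, map_nsmul, smul_comm 6 4,
    ← smul_add] at h
  rw [← Nat.cast_smul_eq_nsmul k, smul_eq_zero] at h
  exact h.resolve_left (by norm_num)

theorem exists_central_coboundary_eq_commutator {Δ : Ug →ₐ[k] Ug ⊗[k] Ug}
    (hΔ : ∀ x : g, Δ (ιU k g x) = ιU k g x ⊗ₜ[k] 1 + 1 ⊗ₜ[k] ιU k g x)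
    {X Y : Ug ⊗[k] Ug}
    (hXr : X ∈ LinearMap.range (ιι k g)) (hYr : Y ∈ LinearMap.range (ιι k g))
    (hXa : τU k g X = -X) (hYa : τU k g Y = -Y)
    (hXinv : ∀ x : g, Commute (Δ (ιU k g x)) X) (hYinv : ∀ x : g, Commute (Δ (ιU k g x)) Y) :
    ∃ a : Ug, (∀ u : Ug, Commute a u) ∧ X * Y - Y * X = a ⊗ₜ[k] 1 + 1 ⊗ₜ[k] a - Δ a := by
  have h := six_smul_commutator_add_coboundary_eq_zero hΔ hXr hYr hXa hYa hXinv hYinv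
  set m := LinearMap.mul' k Ug (X * Y - Y * X)
  have hm : ∀ x : g, Commute (ιU k g x) m := fun x => by
    rw [Commute, SemiconjBy, ← sub_eq_zero, ← mul'_commutator_tmul_one_add_one_tmul, ← hΔ,
      ((hXinv x).commutator_right (hYinv x)).eq, sub_self, map_zero]
  refine ⟨-(6 : k)⁻¹ • m, fun u => ?_, ?_⟩
  · exact (UniversalEnvelopingAlgebra.commute_apply_of_forall_commute_ι (AlgHom.id k Ug)
      (fun x => (hm x).symm) u).smul_left (-(6 : k)⁻¹)
  · rw [← coboundary_apply, map_smul, eq_neg_of_add_eq_zero_right h, smul_neg, neg_smul, neg_neg,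
      ← Nat.cast_smul_eq_nsmul k, smul_smul]
    norm_num

end

/-- For `g`-invariant antisymmetric elements `X, Y` of the image of
`g ⊗ g` in `U(g) ⊗ U(g)`: (i) `[X,Y]` is a symmetric `g`-invariant additive 2-cocycle;
(ii) `[X,Y]` is the coboundary of a central element; (iii) `[X,Y]` commutes with every
element of the same kind. -/
theorem commutator_of_invariant_twists
    (Δ : Ug →ₐ[k] Ug ⊗[k] Ug)
    (hΔ : ∀ x : g, Δ (ιU k g x) = ιU k g x ⊗ₜ[k] 1 + 1 ⊗ₜ[k] ιU k g x)
    (X Y : Ug ⊗[k] Ug)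
    (hXr : X ∈ LinearMap.range (ιι k g)) (hYr : Y ∈ LinearMap.range (ιι k g))
    (hXa : τU k g X = -X) (hYa : τU k g Y = -Y)
    (hXinv : ∀ x : g, Δ (ιU k g x) * X = X * Δ (ιU k g x))
    (hYinv : ∀ x : g, Δ (ιU k g x) * Y = Y * Δ (ιU k g x)) :
    (∀ x : g, Δ (ιU k g x) * (X * Y - Y * X) = (X * Y - Y * X) * Δ (ιU k g x)) ∧
    IsAdd2Cocycle k Δ (X * Y - Y * X) ∧
    τU k g (X * Y - Y * X) = X * Y - Y * X ∧
    (∃ a : Ug, (∀ u : Ug, a * u = u * a) ∧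
      X * Y - Y * X = a ⊗ₜ[k] 1 + 1 ⊗ₜ[k] a - Δ a) ∧
    (∀ Z : Ug ⊗[k] Ug, Z ∈ LinearMap.range (ιι k g) → τU k g Z = -Z →
      (∀ x : g, Δ (ιU k g x) * Z = Z * Δ (ιU k g x)) →
      (X * Y - Y * X) * Z = Z * (X * Y - Y * X)) := by
  have hX : ∀ x : g, Commute (Δ (ιU k g x)) X := hXinv
  have hY : ∀ x : g, Commute (Δ (ιU k g x)) Y := hYinv
  obtain ⟨a, ha, hcob⟩ :=
    exists_central_coboundary_eq_commutator hΔ hXr hYr hXa hYa hX hY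
  refine ⟨fun x => ((hX x).commutator_right (hY x)).eq,
    isAdd2Cocycle_commutator hΔ hXr hYr hXa hYa hX hY, ?_, ⟨a, ha, hcob⟩, ?_⟩
  · rw [map_sub, map_mul, map_mul, hXa, hYa, neg_mul_neg, neg_mul_neg]
  · intro Z _ _ hZinv
    rw [hcob]
    exact (((Algebra.TensorProduct.commute_tmul_one ha Z).add_left
      (Algebra.TensorProduct.commute_one_tmul ha Z)).sub_left
      (UniversalEnvelopingAlgebra.commute_apply_of_forall_commute_ι Δ
        (fun x => (hZinv x).symm) a).symm)
end
end

section
/- Let g be a finite-dimensional Lie algebra over a field k of characteristic zero and let X ∈ g⊗g be antisymmetric (τ(X) = −X) and g-invariant ((ad x ⊗ id + id ⊗ ad x)(X) = 0 for all x ∈ g). Then the support a(X) = {(l⊗id)(X) : l ∈ g*} is an abelian ideal of g: it is an ideal, and [u, v] = 0 for all u, v ∈ a(X). Consequently, if g has no nonzero abelian ideals, then every g-invariant antisymmetric element of g⊗g is zero. -/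
/-!
Antisymmetry of `X` makes the pairing `(l, m) ↦ m ((l ⊗ id) X)` skew, and invariance gives
`((l ∘ ad x) ⊗ id) X = -⁅x, (l ⊗ id) X⁆`, so the support is an ideal. Together they make
`T(l, m, n) = n ⁅(l ⊗ id) X, (m ⊗ id) X⁆` symmetric in `m, n`, while skew-symmetry of the bracket
makes it antisymmetric in `l, m`; such a trilinear form vanishes in characteristic zero. If `g`
has no nonzero abelian ideal the support is zero, and an element of a tensor product of vector
spaces all of whose contractions vanish is zero.
-/

open TensorProduct

noncomputable section

variable (k : Type*) [Field k] [CharZero k]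
variable {g : Type*} [LieRing g] [LieAlgebra k g]

/-- Contraction `(l ⊗ id)(X)` of the first tensor factor against `l ∈ g*`. -/
def contr1 (l : Module.Dual k g) (X : g ⊗[k] g) : g :=
  TensorProduct.lid k g (TensorProduct.map l (LinearMap.id : g →ₗ[k] g) X)

theorem eq_zero_of_symm₂₃_of_antisymm₁₂ {α R : Type*} [NonAssocRing R] [NoZeroDivisors R]
    [CharZero R] (f : α → α → α → R) (symm₂₃ : ∀ a b c, f a b c = f a c b)
    (antisymm₁₂ : ∀ a b c, f a b c = -f b a c) (a b c : α) : f a b c = 0 := by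
  rw [← CharZero.eq_neg_self_iff]
  calc f a b c = f a c b := symm₂₃ a b c
    _ = -f c a b := antisymm₁₂ a c b
    _ = -f c b a := by rw [symm₂₃]
    _ = f b c a := by rw [antisymm₁₂ c b a, neg_neg]
    _ = f b a c := symm₂₃ b c a
    _ = -f a b c := antisymm₁₂ b a c

section

omit [CharZero k]

namespace contr1

@[simp]
theorem tmul (l : Module.Dual k g) (a b : g) : contr1 k l (a ⊗ₜ[k] b) = l a • b := by
  simp [contr1]

@[simp]
theorem zero (l : Module.Dual k g) : contr1 k l 0 = 0 := by
  simp [contr1]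

@[simp]
theorem add (l : Module.Dual k g) (X Y : g ⊗[k] g) :
    contr1 k l (X + Y) = contr1 k l X + contr1 k l Y := by
  simp [contr1]

@[simp]
theorem neg (l : Module.Dual k g) (X : g ⊗[k] g) : contr1 k l (-X) = -contr1 k l X := by
  simp [contr1]

def linearMap (X : g ⊗[k] g) : Module.Dual k g →ₗ[k] g where
  toFun l := contr1 k l X
  map_add' l m := by
    induction X using TensorProduct.induction_on with
    | zero => simp
    | tmul a b => simp [add_smul]
    | add Y Z hY hZ => simp only [add, hY, hZ]; abel
  map_smul' c l := by
    induction X using TensorProduct.induction_on with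
    | zero => simp
    | tmul a b => simp [smul_smul]
    | add Y Z hY hZ => simp only [add, hY, hZ, smul_add]

theorem map (f h : g →ₗ[k] g) (l : Module.Dual k g) (X : g ⊗[k] g) :
    contr1 k l (TensorProduct.map f h X) = h (contr1 k (l ∘ₗ f) X) := by
  induction X using TensorProduct.induction_on with
  | zero => simp
  | tmul a b => simp
  | add Y Z hY hZ => simp only [map_add, add, hY, hZ]

theorem dual_apply_comm (l m : Module.Dual k g) (X : g ⊗[k] g) :
    m (contr1 k l (TensorProduct.comm k g g X)) = l (contr1 k m X) := by
  induction X using TensorProduct.induction_on with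
  | zero => simp
  | tmul a b => simp [mul_comm]
  | add Y Z hY hZ => simp only [map_add, add, hY, hZ]

theorem basis_repr {ι : Type*} (b : Module.Basis ι k g) (X : g ⊗[k] g) (i j : ι) :
    (b.tensorProduct b).repr X (i, j) = b.repr (contr1 k (b.coord i) X) j := by
  induction X using TensorProduct.induction_on with
  | zero => simp
  | tmul a c => simp [Module.Basis.tensorProduct_repr_tmul_apply, mul_comm]
  | add Y Z hY hZ => simp only [map_add, add, Finsupp.add_apply, hY, hZ]

theorem eq_zero_of_forall_eq_zero {X : g ⊗[k] g} (hX : ∀ l, contr1 k l X = 0) : X = 0 := by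
  let b := Module.Free.chooseBasis k g
  refine (b.tensorProduct b).repr.map_eq_zero_iff.mp (Finsupp.ext fun ⟨i, j⟩ => ?_)
  simp [basis_repr, hX]

end contr1

def IsAdInvariant (X : g ⊗[k] g) : Prop :=
  ∀ x : g, TensorProduct.map (LieAlgebra.ad k g x : g →ₗ[k] g) LinearMap.id X +
    TensorProduct.map LinearMap.id (LieAlgebra.ad k g x : g →ₗ[k] g) X = 0

end

section

variable {k} {X : g ⊗[k] g}

section

omit [CharZero k]

theorem dual_apply_contr1_of_comm_eq_neg (hXa : TensorProduct.comm k g g X = -X)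
    (l m : Module.Dual k g) : m (contr1 k l X) = -l (contr1 k m X) := by
  rw [← contr1.dual_apply_comm, hXa, contr1.neg, map_neg]

theorem IsAdInvariant.contr1_comp_ad (hX : IsAdInvariant k X) (x : g) (l : Module.Dual k g) :
    contr1 k (l ∘ₗ LieAlgebra.ad k g x) X = -⁅x, contr1 k l X⁆ := by
  have h := congrArg (contr1 k l) (hX x)
  rw [contr1.add, contr1.map, contr1.map, contr1.zero] at h
  exact eq_neg_of_add_eq_zero_left h

def IsAdInvariant.support (hX : IsAdInvariant k X) : LieIdeal k g :=
  { LinearMap.range (contr1.linearMap k X) with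
    lie_mem := by
      rintro x _ ⟨l, rfl⟩
      refine ⟨-(l ∘ₗ LieAlgebra.ad k g x), ?_⟩
      rw [map_neg]
      exact neg_eq_iff_eq_neg.mpr (hX.contr1_comp_ad x l) }

theorem IsAdInvariant.contr1_mem_support (hX : IsAdInvariant k X) (l : Module.Dual k g) :
    contr1 k l X ∈ hX.support :=
  ⟨l, rfl⟩

theorem IsAdInvariant.dual_apply_lie_contr1_comm (hX : IsAdInvariant k X)
    (hXa : TensorProduct.comm k g g X = -X) (l m n : Module.Dual k g) :
    n ⁅contr1 k l X, contr1 k m X⁆ = m ⁅contr1 k l X, contr1 k n X⁆ := by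
  set u := contr1 k l X
  calc n ⁅u, contr1 k m X⁆ = -n (contr1 k (m ∘ₗ LieAlgebra.ad k g u) X) := by
        rw [hX.contr1_comp_ad, map_neg, neg_neg]
    _ = m ⁅u, contr1 k n X⁆ := by
        rw [dual_apply_contr1_of_comm_eq_neg hXa, neg_neg]
        rfl

end

theorem IsAdInvariant.lie_contr1_eq_zero (hX : IsAdInvariant k X)
    (hXa : TensorProduct.comm k g g X = -X) (l m : Module.Dual k g) :
    ⁅contr1 k l X, contr1 k m X⁆ = 0 := by
  refine (Module.forall_dual_apply_eq_zero_iff k _).mp fun n => ?_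
  refine eq_zero_of_symm₂₃_of_antisymm₁₂ (fun l m n => n ⁅contr1 k l X, contr1 k m X⁆)
    (fun l m n => ?_) (fun l m n => ?_) l m n
  · exact hX.dual_apply_lie_contr1_comm hXa l m n
  · rw [← lie_skew, map_neg]

end

theorem support_of_invariant_is_abelian_ideal
    (X : g ⊗[k] g)
    (hXa : TensorProduct.comm k g g X = -X)
    (hXinv : ∀ x : g,
      TensorProduct.map (LieAlgebra.ad k g x : g →ₗ[k] g) LinearMap.id X +
        TensorProduct.map LinearMap.id (LieAlgebra.ad k g x : g →ₗ[k] g) X = 0) :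
    (∀ (x : g) (l : Module.Dual k g), ∃ m : Module.Dual k g,
      ⁅x, contr1 k l X⁆ = contr1 k m X) ∧
    (∀ l m : Module.Dual k g, ⁅contr1 k l X, contr1 k m X⁆ = 0) ∧
    ((∀ I : LieIdeal k g, (∀ u ∈ I, ∀ v ∈ I, ⁅u, v⁆ = (0 : g)) → I = ⊥) → X = 0) := by
  have hX : IsAdInvariant k X := hXinv
  refine ⟨fun x l => ?_, hX.lie_contr1_eq_zero hXa, fun hno => ?_⟩
  · obtain ⟨m, hm⟩ := hX.support.lie_mem (x := x) (hX.contr1_mem_support l)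
    exact ⟨m, hm.symm⟩
  · have hbot : hX.support = ⊥ := hno _ <| by
      rintro _ ⟨l, rfl⟩ _ ⟨m, rfl⟩
      exact hX.lie_contr1_eq_zero hXa l m
    refine contr1.eq_zero_of_forall_eq_zero k fun l => ?_
    simpa [hbot] using hX.contr1_mem_support l

end
end
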